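/- arXiv:2105.07766 — 4 statements merged into one kernel-verified Lean document; each statement's English description precedes it below -/
import Mathlib

section
/- If the polynomials π_k satisfy the generating relation A₁(h(t))·A₂(x·h(t)) = Σ_{k=0}^∞ π_k(x) t^k and h'(1)=1, then for every n ≥ 1 and x ≥ 0 one has Σ_{k=0}^∞ k²·π_k(nx) = [(h''(1)+1)·A₁'(h(1)) + A₁''(h(1))]·A₂(nx·h(1)) + [2A₁'(h(1)) + (h''(1)+1)·A₁(h(1))]·A₂'(nx·h(1))·nx + A₁(h(1))·A₂''(nx·h(1))·(nx)². -/
/-!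
Write `F(t) = A₁(h t) · A₂(y · h t) = ∑ π_k(y) tᵏ` with `y = n x`. Applying the Euler operator
`t d/dt` twice multiplies the coefficients by `k²`, so `∑ k² π_k(y) = F''(1) + F'(1)`, and the
product and chain rules expand this into the stated combination of derivatives of `A₁`, `A₂`, `h`.

The derivatives of `A₁` at `h 1` and of `A₂` at `y · h 1` are meaningful although these points may
lie outside the disc where `A₁`, `A₂` are given by their series: `A₁ ∘ h` is analytic near `1`
(it is the generating function at `x = 0`, divided by `A₂ 0`) and `h'(1) = 1 ≠ 0`, so `A₁` is
analytic at `h 1` by the analytic inverse function theorem; likewise `A₂ ∘ (y · h) = F / (A₁ ∘ h)`.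
-/

/-- Data for generalized Brenke polynomials: analytic functions `A₁, A₂, h`
given by power series on `{t : |t| < R}` (`R > 1`), with `A₁, A₂ > 0` on `ℝ`,
`h'(1) = 1`, and polynomials `p k` satisfying the generating relation
`A₁(h(t)) · A₂(x · h(t)) = ∑ₖ p k x · tᵏ` with `p k x ≥ 0` for `x ≥ 0`. -/
structure BrenkeData where
  R : ℝ
  A₁ : ℝ → ℝ
  A₂ : ℝ → ℝ
  h : ℝ → ℝ
  a₁ : ℕ → ℝ
  a₂ : ℕ → ℝ
  c : ℕ → ℝ
  p : ℕ → ℝ → ℝ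
  hR : 1 < R
  ha₁ : a₁ 0 ≠ 0
  ha₂ : ∀ k, a₂ k ≠ 0
  hc0 : c 0 = 0
  hc1 : c 1 ≠ 0
  hA₁ : ∀ t : ℝ, |t| < R → HasSum (fun k => a₁ k * t ^ k) (A₁ t)
  hA₂ : ∀ t : ℝ, |t| < R → HasSum (fun k => a₂ k * t ^ k) (A₂ t)
  hh : ∀ t : ℝ, |t| < R → HasSum (fun k => c k * t ^ k) (h t)
  hA₁pos : ∀ t : ℝ, 0 < A₁ t
  hA₂pos : ∀ t : ℝ, 0 < A₂ t
  hh1 : deriv h 1 = 1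
  hgen : ∀ x t : ℝ, |t| < R → HasSum (fun k => p k x * t ^ k) (A₁ (h t) * A₂ (x * h t))
  hpos : ∀ (k : ℕ) (x : ℝ), 0 ≤ x → 0 ≤ p k x

/-- The Stancu type operator `L_n^{(ν₁,ν₂)}` including generalized Brenke polynomials. -/
noncomputable def stancuL (B : BrenkeData) (ν₁ ν₂ : ℝ) (n : ℕ) (f : ℝ → ℝ) (x : ℝ) : ℝ :=
  (B.A₁ (B.h 1) * B.A₂ (n * x * B.h 1))⁻¹ *
    ∑' k : ℕ, B.p k (n * x) * f ((k + ν₁) / (n + ν₂))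

open Set Topology

def HasPowerSeriesOn (a : ℕ → ℝ) (f : ℝ → ℝ) (R : ℝ) : Prop :=
  ∀ t : ℝ, |t| < R → HasSum (fun k => a k * t ^ k) (f t)

theorem summable_succ_mul_abs_mul_pow {a : ℕ → ℝ} {r s : ℝ} (hr : 0 ≤ r) (hrs : r < s)
    (hs : Summable fun k => a k * s ^ k) :
    Summable fun k : ℕ => (k + 1) * |a (k + 1)| * r ^ k := by
  have hs0 : 0 < s := hr.trans_lt hrs
  obtain ⟨C, hC⟩ := hs.tendsto_atTop_zero.norm.bddAbove_range
  have hq : ‖r / s‖ < 1 := by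
    rw [Real.norm_eq_abs, abs_of_nonneg (by positivity), div_lt_one hs0]
    exact hrs
  refine .of_nonneg_of_le (fun k => by positivity) (fun k => ?_)
    ((summable_choose_mul_geometric_of_norm_lt_one 1 hq).mul_left (C / s))
  have hbound : |a (k + 1)| * s ^ (k + 1) ≤ C := by
    simpa [abs_mul, abs_of_pos hs0] using hC ⟨k + 1, rfl⟩
  calc (k + 1) * |a (k + 1)| * r ^ k
      = (|a (k + 1)| * s ^ (k + 1)) * ((k + 1) * (r / s) ^ k / s) := by
        rw [div_pow]; field_simp; ring
    _ ≤ C * ((k + 1) * (r / s) ^ k / s) := by gcongr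
    _ = C / s * (((k + 1).choose 1 : ℕ) * (r / s) ^ k) := by
        rw [Nat.choose_one_right]; push_cast; ring

namespace HasPowerSeriesOn

variable {a : ℕ → ℝ} {f : ℝ → ℝ} {R : ℝ}

theorem hasFPowerSeriesOnBall (hf : HasPowerSeriesOn a f R) (hR : 0 < R) :
    HasFPowerSeriesOnBall f (FormalMultilinearSeries.ofScalars ℝ a) 0 (ENNReal.ofReal R) where
  r_le := by
    refine ENNReal.le_of_forall_nnreal_lt fun r hr => ?_
    have hrR : |(r : ℝ)| < R := by rwa [NNReal.abs_eq, ← ENNReal.coe_lt_ofReal]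
    refine FormalMultilinearSeries.le_radius_of_tendsto _ (l := 0) ?_
    simpa [FormalMultilinearSeries.ofScalars_norm] using
      (hf r hrR).summable.tendsto_atTop_zero.norm
  r_pos := ENNReal.ofReal_pos.2 hR
  hasSum {t} ht := by
    have ht' : |t| < R := by simpa using ht
    simpa [FormalMultilinearSeries.ofScalars_apply_eq, mul_comm] using hf t ht'

theorem analyticAt (hf : HasPowerSeriesOn a f R) {t : ℝ} (ht : |t| < R) : AnalyticAt ℝ f t :=
  (hf.hasFPowerSeriesOnBall ((abs_nonneg t).trans_lt ht)).analyticAt_of_mem (by simpa using ht)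

theorem deriv (hf : HasPowerSeriesOn a f R) :
    HasPowerSeriesOn (fun k => (k + 1) * a (k + 1)) (_root_.deriv f) R := by
  intro t ht
  obtain ⟨r, htr, hrR⟩ := exists_between ht
  obtain ⟨s, hrs, hsR⟩ := exists_between hrR
  have hr : 0 ≤ r := (abs_nonneg t).trans htr.le
  have hu := summable_succ_mul_abs_mul_pow hr hrs
    (hf s (by rwa [abs_of_pos (hr.trans_lt hrs)])).summable
  have hbound : ∀ k (z : ℝ), z ∈ Ioo (-r) r →
      ‖(k + 1) * a (k + 1) * z ^ k‖ ≤ (k + 1) * |a (k + 1)| * r ^ k := by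
    intro k z hz
    rw [norm_mul, norm_mul, norm_pow, Real.norm_eq_abs, Real.norm_eq_abs, Real.norm_eq_abs,
      abs_of_nonneg (by positivity : (0 : ℝ) ≤ k + 1)]
    gcongr
    exact (abs_lt.2 hz).le
  have ht_mem : t ∈ Ioo (-r) r := abs_lt.1 htr
  have hderiv : HasDerivAt (fun z => ∑' k, a (k + 1) * z ^ (k + 1))
      (∑' k : ℕ, (k + 1) * a (k + 1) * t ^ k) t := by
    refine hasDerivAt_tsum_of_isPreconnected hu isOpen_Ioo isPreconnected_Ioo
      (fun k z _ => ?_) hbound ht_mem ((hasSum_nat_add_iff' 1).2 (hf t ht)).summable ht_mem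
    exact ((hasDerivAt_pow (k + 1) z).const_mul (a (k + 1))).congr_deriv (by push_cast; ring)
  have hf_eq : f =ᶠ[𝓝 t] fun z => a 0 + ∑' k, a (k + 1) * z ^ (k + 1) := by
    have hball : Metric.ball (0 : ℝ) R ∈ 𝓝 t := Metric.isOpen_ball.mem_nhds (by simpa using ht)
    filter_upwards [hball] with z hz
    have hz' := hf z (by simpa using hz)
    simpa using (hz'.summable.tsum_eq_zero_add).symm.trans hz'.tsum_eq |>.symm
  rw [((hderiv.const_add (a 0)).congr_of_eventuallyEq hf_eq).deriv]
  exact (Summable.of_norm_bounded hu fun k => hbound k t ht_mem).hasSum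

theorem mul_deriv (hf : HasPowerSeriesOn a f R) :
    HasPowerSeriesOn (fun k => k * a k) (fun t => t * _root_.deriv f t) R := by
  intro t ht
  have h : HasSum (fun k : ℕ => ((k + 1 : ℕ) : ℝ) * a (k + 1) * t ^ (k + 1))
      (t * _root_.deriv f t) :=
    ((hf.deriv t ht).mul_left t).congr_fun fun k => by push_cast; ring
  simpa using HasSum.zero_add (f := fun k : ℕ => (k : ℝ) * a k * t ^ k) h

theorem hasSum_sq_mul (hf : HasPowerSeriesOn a f R) {t : ℝ} (ht : |t| < R) :
    HasSum (fun k : ℕ => (k : ℝ) ^ 2 * a k * t ^ k)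
      (t ^ 2 * _root_.deriv (_root_.deriv f) t + t * _root_.deriv f t) := by
  have hdiff : DifferentiableAt ℝ (_root_.deriv f) t := (hf.deriv.analyticAt ht).differentiableAt
  have hd : HasDerivAt (fun s => s * _root_.deriv f s)
      (_root_.deriv f t + t * _root_.deriv (_root_.deriv f) t) t :=
    (hasDerivAt_id' t).fun_mul hdiff.hasDerivAt |>.congr_deriv (by simp)
  have h : HasSum (fun k : ℕ => k * (k * a k) * t ^ k)
      (t * _root_.deriv (fun s => s * _root_.deriv f s) t) :=
    hf.mul_deriv.mul_deriv t ht
  rw [hd.deriv] at h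
  rw [show t ^ 2 * _root_.deriv (_root_.deriv f) t + t * _root_.deriv f t
    = t * (_root_.deriv f t + t * _root_.deriv (_root_.deriv f) t) by ring]
  exact h.congr_fun fun k => by ring

end HasPowerSeriesOn

section SecondDerivative

variable {𝕜 : Type*} [NontriviallyNormedField 𝕜] {f g : 𝕜 → 𝕜} {x : 𝕜}

theorem deriv_deriv_mul (hf : ContDiffAt 𝕜 2 f x) (hg : ContDiffAt 𝕜 2 g x) :
    deriv (deriv fun t => f t * g t) x
      = deriv (deriv f) x * g x + 2 * deriv f x * deriv g x + f x * deriv (deriv g) x := by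
  have hf1 : ∀ᶠ t in 𝓝 x, DifferentiableAt 𝕜 f t :=
    (hf.eventually (by simp)).mono fun t ht => ht.differentiableAt (by simp)
  have hg1 : ∀ᶠ t in 𝓝 x, DifferentiableAt 𝕜 g t :=
    (hg.eventually (by simp)).mono fun t ht => ht.differentiableAt (by simp)
  have hf2 : DifferentiableAt 𝕜 (deriv f) x :=
    (hf.derivWithin (m := 1) (by norm_num)).differentiableAt one_ne_zero
  have hg2 : DifferentiableAt 𝕜 (deriv g) x :=
    (hg.derivWithin (m := 1) (by norm_num)).differentiableAt one_ne_zero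
  have hprod : deriv (fun t => f t * g t) =ᶠ[𝓝 x] fun t => deriv f t * g t + f t * deriv g t := by
    filter_upwards [hf1, hg1] with t hft hgt using deriv_fun_mul hft hgt
  have hsum : HasDerivAt (fun t => deriv f t * g t + f t * deriv g t)
      (deriv (deriv f) x * g x + deriv f x * deriv g x
        + (deriv f x * deriv g x + f x * deriv (deriv g) x)) x :=
    (hf2.hasDerivAt.mul hg1.self_of_nhds.hasDerivAt).add
      (hf1.self_of_nhds.hasDerivAt.mul hg2.hasDerivAt)
  rw [hprod.deriv_eq, hsum.deriv]
  ring

theorem deriv_deriv_comp (hg : ContDiffAt 𝕜 2 g (f x)) (hf : ContDiffAt 𝕜 2 f x) :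
    deriv (deriv (g ∘ f)) x
      = deriv (deriv g) (f x) * deriv f x ^ 2 + deriv g (f x) * deriv (deriv f) x := by
  simpa only [iteratedDeriv_succ, iteratedDeriv_zero] using iteratedDeriv_comp_two hg hf

end SecondDerivative

namespace BrenkeData

variable (B : BrenkeData)

theorem abs_one_lt_R : |(1 : ℝ)| < B.R := by
  rw [abs_one]
  exact B.hR

theorem hasPowerSeriesOn_A₁_comp_h :
    HasPowerSeriesOn (fun k => B.p k 0 / B.A₂ 0) (B.A₁ ∘ B.h) B.R := by
  intro t ht
  have h := (B.hgen 0 t ht).div_const (B.A₂ 0)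
  rw [zero_mul, mul_div_cancel_right₀ _ (B.hA₂pos 0).ne'] at h
  exact h.congr_fun fun k => by ring

theorem analyticAt_h : AnalyticAt ℝ B.h 1 :=
  HasPowerSeriesOn.analyticAt B.hh B.abs_one_lt_R

theorem analyticAt_A₁ : AnalyticAt ℝ B.A₁ (B.h 1) :=
  (analyticAt_comp_iff_of_deriv_ne_zero B.analyticAt_h (by rw [B.hh1]; exact one_ne_zero)).1
    (B.hasPowerSeriesOn_A₁_comp_h.analyticAt B.abs_one_lt_R)

theorem analyticAt_A₂ (y : ℝ) : AnalyticAt ℝ B.A₂ (y * B.h 1) := by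
  rcases eq_or_ne y 0 with rfl | hy
  · rw [zero_mul]
    exact HasPowerSeriesOn.analyticAt B.hA₂ (by rw [abs_zero]; linarith [B.hR])
  have hm : deriv (fun t => y * B.h t) 1 ≠ 0 := by
    rw [deriv_const_mul_field, B.hh1, mul_one]
    exact hy
  have hmA : AnalyticAt ℝ (fun t => y * B.h t) 1 := analyticAt_const.mul B.analyticAt_h
  refine (analyticAt_comp_iff_of_deriv_ne_zero hmA hm).1 ?_
  have hF := HasPowerSeriesOn.analyticAt (B.hgen y) B.abs_one_lt_R
  have hφ := B.hasPowerSeriesOn_A₁_comp_h.analyticAt B.abs_one_lt_R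
  have hquot : B.A₂ ∘ (fun t => y * B.h t)
      = fun t => B.A₁ (B.h t) * B.A₂ (y * B.h t) / (B.A₁ ∘ B.h) t := by
    funext t
    simp [(B.hA₁pos (B.h t)).ne']
  rw [hquot]
  exact hF.div hφ (B.hA₁pos _).ne'

end BrenkeData

theorem brenke_sum_two_general (B : BrenkeData) (n : ℕ) (x : ℝ) :
    HasSum (fun k : ℕ => (k : ℝ) ^ 2 * B.p k (n * x))
      (((deriv (deriv B.h) 1 + 1) * deriv B.A₁ (B.h 1) + deriv (deriv B.A₁) (B.h 1))
          * B.A₂ (n * x * B.h 1)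
        + (2 * deriv B.A₁ (B.h 1) + (deriv (deriv B.h) 1 + 1) * B.A₁ (B.h 1))
            * deriv B.A₂ (n * x * B.h 1) * (n * x)
        + B.A₁ (B.h 1) * deriv (deriv B.A₂) (n * x * B.h 1) * (n * x) ^ 2) := by
  set y : ℝ := n * x
  have hh : ContDiffAt ℝ 2 B.h 1 := B.analyticAt_h.contDiffAt
  have hA₁ : ContDiffAt ℝ 2 B.A₁ (B.h 1) := B.analyticAt_A₁.contDiffAt
  have hA₂ : ContDiffAt ℝ 2 B.A₂ (y * B.h 1) := (B.analyticAt_A₂ y).contDiffAt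
  have hm : ContDiffAt ℝ 2 (fun t => y * B.h t) 1 := contDiffAt_const.mul hh
  have hm1 : deriv (fun t => y * B.h t) 1 = y := by
    rw [deriv_const_mul_field, B.hh1, mul_one]
  have hm2 : deriv (deriv fun t => y * B.h t) 1 = y * deriv (deriv B.h) 1 := by
    rw [deriv_const_mul_field', deriv_const_mul_field]
  have hsum := HasPowerSeriesOn.hasSum_sq_mul (B.hgen y) B.abs_one_lt_R
  have hF2 := deriv_deriv_mul (hA₁.comp 1 hh) (hA₂.comp 1 hm)
  have hF1 := deriv_fun_mul ((hA₁.comp 1 hh).differentiableAt two_ne_zero)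
    ((hA₂.comp 1 hm).differentiableAt two_ne_zero)
  simp only [Function.comp_apply] at hF1 hF2
  rw [hF2, hF1, deriv_deriv_comp hA₁ hh, deriv_deriv_comp (f := fun t => y * B.h t) hA₂ hm,
    deriv_comp _ (hA₁.differentiableAt two_ne_zero) (hh.differentiableAt two_ne_zero),
    deriv_comp (h := fun t => y * B.h t) _ (hA₂.differentiableAt two_ne_zero)
      (hm.differentiableAt two_ne_zero),
    hm1, hm2, B.hh1] at hsum
  simp only [one_pow, mul_one, one_mul] at hsum
  convert hsum using 1
  ring

/-- Lemma 2.1, third identity for `∑ₖ k²·π_k(nx)`. -/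
theorem brenke_sum_two (B : BrenkeData) (n : ℕ) (hn : 1 ≤ n) (x : ℝ) (hx : 0 ≤ x) :
    HasSum (fun k : ℕ => (k : ℝ) ^ 2 * B.p k (n * x))
      (((deriv (deriv B.h) 1 + 1) * deriv B.A₁ (B.h 1) + deriv (deriv B.A₁) (B.h 1))
          * B.A₂ (n * x * B.h 1)
        + (2 * deriv B.A₁ (B.h 1) + (deriv (deriv B.h) 1 + 1) * B.A₁ (B.h 1))
            * deriv B.A₂ (n * x * B.h 1) * (n * x)
        + B.A₁ (B.h 1) * deriv (deriv B.A₂) (n * x * B.h 1) * (n * x) ^ 2) :=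
  brenke_sum_two_general B n x
end

section
/- For every n ≥ 1, ν₁, ν₂ ≥ 0 and x ≥ 0, the Stancu-type operator applied to the identity function s ↦ s satisfies L_n^{(ν₁,ν₂)}(s; x) = [A₂'(nx·h(1))·n / (A₂(nx·h(1))·(n+ν₂))]·x + (A₁'(h(1))/A₁(h(1)) + ν₁)·1/(n+ν₂). -/
/-!
The sum `∑ₖ pₖ(nx) (k + ν₁)/(n + ν₂)` splits into `∑ₖ k pₖ(nx)`, the derivative at `t = 1` of the
generating function `A₁(h t) A₂(nx h t)`, and `∑ₖ pₖ(nx)`, its value at `t = 1`; the product and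
chain rules then give the formula. The point `h 1` need not lie in the disc of convergence of `A₁`,
so differentiability of `A₁` at `h 1` (and of `A₂` at `nx h 1`) comes instead from that of the
power series `A₁ ∘ h` (and `A₂ ∘ (nx • h)`) in `t`, by inverting `h` near `1`, where `h' = 1 ≠ 0`.
-/

open Filter FormalMultilinearSeries

section PowerSeries

variable {a : ℕ → ℝ} {R : ℝ} {g : ℝ → ℝ}

theorem hasFPowerSeriesOnBall_ofScalars_of_hasSum (hR : 0 < R)
    (hg : ∀ t : ℝ, |t| < R → HasSum (fun k => a k * t ^ k) (g t)) :
    HasFPowerSeriesOnBall g (ofScalars ℝ a) 0 (ENNReal.ofReal R) where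
  r_le := by
    refine ENNReal.le_of_forall_nnreal_lt fun r hr => le_radius_of_summable _ ?_
    have hrR : |(r : ℝ)| < R := by
      rw [NNReal.abs_eq]; exact (ENNReal.ofReal_lt_ofReal_iff hR).1 (by simpa using hr)
    simpa [ofScalars_norm, abs_mul] using (hg r hrR).summable.abs
  r_pos := by simpa using hR
  hasSum {t} ht := by
    have htR : |t| < R := by simpa [Metric.mem_eball, edist_dist] using ht
    simpa [ofScalars_apply_eq, mul_comm] using hg t htR

theorem hasStrictDerivAt_one_of_hasSum (hR : 1 < R)
    (hg : ∀ t : ℝ, |t| < R → HasSum (fun k => a k * t ^ k) (g t)) :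
    HasStrictDerivAt g (deriv g 1) 1 :=
  ((hasFPowerSeriesOnBall_ofScalars_of_hasSum (by linarith) hg).analyticAt_of_mem
    (by simpa [Metric.mem_eball, edist_dist] using hR)).hasStrictDerivAt

theorem hasSum_nat_mul_deriv_one_of_hasSum (hR : 1 < R)
    (hg : ∀ t : ℝ, |t| < R → HasSum (fun k => a k * t ^ k) (g t)) :
    HasSum (fun k : ℕ => (k : ℝ) * a k) (deriv g 1) := by
  have hderiv := (hasFPowerSeriesOnBall_ofScalars_of_hasSum (by linarith) hg).fderiv
  have hone : (1 : ℝ) ∈ Metric.eball (0 : ℝ) (ENNReal.ofReal R) := by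
    simpa [Metric.mem_eball, edist_dist] using hR
  have hshift := (ContinuousLinearMap.apply ℝ ℝ (1 : ℝ)).hasSum (hderiv.hasSum hone)
  rw [← hasSum_nat_add_iff' 1]
  simpa using hshift

end PowerSeries

theorem HasStrictDerivAt.hasDerivAt_of_hasDerivAt_comp {𝕜 F : Type*} [NontriviallyNormedField 𝕜]
    [CompleteSpace 𝕜] [NormedAddCommGroup F] [NormedSpace 𝕜 F] {φ : 𝕜 → 𝕜} {A : 𝕜 → F}
    {a c : 𝕜} {d : F} (hφ : HasStrictDerivAt φ c a) (hc : c ≠ 0) (hA : HasDerivAt (A ∘ φ) d a) :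
    HasDerivAt A (c⁻¹ • d) (φ a) := by
  set ψ := hφ.localInverse φ c a hc
  have hψa : ψ (φ a) = a := (hφ.eventually_left_inverse hc).self_of_nhds
  have hAψ : HasDerivAt (A ∘ φ ∘ ψ) (c⁻¹ • d) (φ a) :=
    (hψa ▸ hA).scomp (φ a) (hφ.to_localInverse hc).hasDerivAt
  exact hAψ.congr_of_eventuallyEq <|
    (hφ.eventually_right_inverse hc).mono fun u hu => congrArg A hu.symm

namespace BrenkeData

variable (B : BrenkeData)

def generatingFunction (y t : ℝ) : ℝ := B.A₁ (B.h t) * B.A₂ (y * B.h t)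

theorem hasStrictDerivAt_h : HasStrictDerivAt B.h 1 1 := by
  simpa only [B.hh1] using hasStrictDerivAt_one_of_hasSum B.hR B.hh

theorem hasSum_A₁_comp_h (t : ℝ) (ht : |t| < B.R) :
    HasSum (fun k => B.p k 0 / B.A₂ 0 * t ^ k) (B.A₁ (B.h t)) := by
  have h0 := (B.hgen 0 t ht).div_const (B.A₂ 0)
  simp only [zero_mul, mul_div_cancel_right₀ _ (B.hA₂pos 0).ne'] at h0
  simpa only [div_mul_eq_mul_div] using h0

theorem differentiableAt_A₁_comp_h : DifferentiableAt ℝ (fun t => B.A₁ (B.h t)) 1 :=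
  (hasStrictDerivAt_one_of_hasSum B.hR B.hasSum_A₁_comp_h).hasDerivAt.differentiableAt

theorem differentiableAt_A₁ : DifferentiableAt ℝ B.A₁ (B.h 1) :=
  (B.hasStrictDerivAt_h.hasDerivAt_of_hasDerivAt_comp one_ne_zero
    B.differentiableAt_A₁_comp_h.hasDerivAt).differentiableAt

theorem differentiableAt_A₂ {y : ℝ} (hy : y ≠ 0) : DifferentiableAt ℝ B.A₂ (y * B.h 1) := by
  have hquot : DifferentiableAt ℝ (fun t => B.generatingFunction y t / B.A₁ (B.h t)) 1 :=
    (hasStrictDerivAt_one_of_hasSum B.hR (B.hgen y)).hasDerivAt.differentiableAt.div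
      B.differentiableAt_A₁_comp_h (B.hA₁pos _).ne'
  have hcomp : DifferentiableAt ℝ (B.A₂ ∘ fun t => y * B.h t) 1 :=
    hquot.congr_of_eventuallyEq <| Eventually.of_forall fun t => by
      simp [generatingFunction, mul_div_cancel_left₀ _ (B.hA₁pos _).ne']
  exact ((B.hasStrictDerivAt_h.const_mul y).hasDerivAt_of_hasDerivAt_comp (by simpa)
    hcomp.hasDerivAt).differentiableAt

theorem hasDerivAt_generatingFunction (y : ℝ) :
    HasDerivAt (B.generatingFunction y)
      (deriv B.A₁ (B.h 1) * B.A₂ (y * B.h 1) + B.A₁ (B.h 1) * (deriv B.A₂ (y * B.h 1) * y)) 1 := by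
  have hA₁h : HasDerivAt (fun t => B.A₁ (B.h t)) (deriv B.A₁ (B.h 1)) 1 := by
    simpa [Function.comp_def] using
      B.differentiableAt_A₁.hasDerivAt.scomp 1 B.hasStrictDerivAt_h.hasDerivAt
  unfold generatingFunction
  rcases eq_or_ne y 0 with rfl | hy
  · simpa using hA₁h.mul_const (B.A₂ 0)
  · have hA₂h : HasDerivAt (fun t => B.A₂ (y * B.h t)) (deriv B.A₂ (y * B.h 1) * y) 1 := by
      simpa [Function.comp_def, mul_comm] using
        (B.differentiableAt_A₂ hy).hasDerivAt.scomp 1 (B.hasStrictDerivAt_h.hasDerivAt.const_mul y)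
    exact hA₁h.mul hA₂h

theorem hasSum_nat_mul_p (y : ℝ) :
    HasSum (fun k : ℕ => (k : ℝ) * B.p k y)
      (deriv B.A₁ (B.h 1) * B.A₂ (y * B.h 1) + B.A₁ (B.h 1) * (deriv B.A₂ (y * B.h 1) * y)) :=
  (B.hasDerivAt_generatingFunction y).deriv ▸ hasSum_nat_mul_deriv_one_of_hasSum B.hR (B.hgen y)

theorem hasSum_p (y : ℝ) : HasSum (fun k => B.p k y) (B.A₁ (B.h 1) * B.A₂ (y * B.h 1)) := by
  simpa using B.hgen y 1 (by simpa using B.hR)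

end BrenkeData

theorem stancuL_id_general (B : BrenkeData) (ν₁ ν₂ : ℝ)
    (n : ℕ) (x : ℝ) :
    stancuL B ν₁ ν₂ n (fun s => s) x =
      deriv B.A₂ (n * x * B.h 1) * n / (B.A₂ (n * x * B.h 1) * (n + ν₂)) * x
        + (deriv B.A₁ (B.h 1) / B.A₁ (B.h 1) + ν₁) * (1 / (n + ν₂)) := by
  have hsum := ((B.hasSum_nat_mul_p (n * x)).add ((B.hasSum_p (n * x)).mul_left ν₁)).div_const
    (n + ν₂)
  rw [stancuL, (hsum.congr_fun fun k => by ring).tsum_eq]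
  have hA₁ := (B.hA₁pos (B.h 1)).ne'
  have hA₂ := (B.hA₂pos (n * x * B.h 1)).ne'
  field_simp
  ring

/-- `L_n^{(ν₁,ν₂)}(s; x)` formula. -/
theorem stancuL_id (B : BrenkeData) (ν₁ ν₂ : ℝ) (hν₁ : 0 ≤ ν₁) (hν₂ : 0 ≤ ν₂)
    (n : ℕ) (hn : 1 ≤ n) (x : ℝ) (hx : 0 ≤ x) :
    stancuL B ν₁ ν₂ n (fun s => s) x =
      deriv B.A₂ (n * x * B.h 1) * n / (B.A₂ (n * x * B.h 1) * (n + ν₂)) * x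
        + (deriv B.A₁ (B.h 1) / B.A₁ (B.h 1) + ν₁) * (1 / (n + ν₂)) :=
  stancuL_id_general B ν₁ ν₂ n x
end

section
/- Let f : [0,∞) → ℝ be uniformly continuous with f(x)/(1+x²) convergent as x → ∞. Then for all n ≥ 1 and x ≥ 0, |L_n^{(ν₁,ν₂)}(f; x) − f(x)| ≤ 2·ω(f; δ_n(x)), where δ_n(x) = √(L_n^{(ν₁,ν₂)}((s−x)²; x)) and ω(f; δ) = sup{|f(t)−f(s)| : t, s ∈ [0,∞), |t−s| ≤ δ} is the modulus of continuity of f. -/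
/-- The modulus of continuity of `f` on `[0,∞)`:
`ω(f; δ) = sup {|f t − f s| : t, s ∈ [0,∞), |t − s| ≤ δ}`. -/
noncomputable def modulus (f : ℝ → ℝ) (δ : ℝ) : ℝ :=
  sSup {d : ℝ | ∃ t s : ℝ, 0 ≤ t ∧ 0 ≤ s ∧ |t - s| ≤ δ ∧ d = |f t - f s|}

/-!
On `[0,∞)` a uniformly continuous `f` satisfies `|f t - f s| ≤ (1 + (t - s)² / δ²) ω(f; δ)`:
split `[s, t]` into `⌈|t - s| / δ⌉` steps of length at most `δ`. The operator is an average
`∑ qₖ g(ξₖ)` against nonnegative weights of total mass `1` (the generating relation at `t = 1`),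
so averaging this inequality at `s = x` gives `|L f - f x| ≤ (1 + L((s - x)²; x) / δ²) ω(f; δ)`,
and `δ = δₙ(x)` yields the factor `2`; if `δₙ(x) = 0`, all the mass sits at `x`. The second
moment is finite because the generating series also converges at some `r > 1`, which makes
`pₖ(nx)` decay geometrically.
-/

open Set

section Modulus

variable {f : ℝ → ℝ}

lemma abs_sub_le_mul_of_forall_abs_sub_le {S : Set ℝ} (hS : Convex ℝ S) {δ ε : ℝ}
    (hf : ∀ u ∈ S, ∀ v ∈ S, |u - v| ≤ δ → |f u - f v| ≤ ε) {t s : ℝ} (ht : t ∈ S) (hs : s ∈ S)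
    {m : ℕ} (hm : 0 < m) (hts : |t - s| ≤ m * δ) : |f t - f s| ≤ m * ε := by
  have hm' : (0 : ℝ) < m := by exact_mod_cast hm
  set g : ℕ → ℝ := fun i => s + ((i : ℝ) / m) • (t - s)
  have hgS : ∀ i ≤ m, g i ∈ S := fun i hi => hS.add_smul_sub_mem hs ht
    ⟨by positivity, div_le_one_of_le₀ (by exact_mod_cast hi) hm'.le⟩
  have hstep : ∀ i, |g (i + 1) - g i| ≤ δ := by
    intro i
    have : g (i + 1) - g i = (t - s) / m := by simp only [g, smul_eq_mul]; push_cast; ring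
    rw [this, abs_div, Nat.abs_cast, div_le_iff₀ hm']
    linarith
  calc |f t - f s| = |∑ i ∈ Finset.range m, (f (g (i + 1)) - f (g i))| := by
        rw [Finset.sum_range_sub (fun i => f (g i))]
        simp [g, hm'.ne']
    _ ≤ ∑ i ∈ Finset.range m, |f (g (i + 1)) - f (g i)| := Finset.abs_sum_le_sum_abs _ _
    _ ≤ ∑ _i ∈ Finset.range m, ε := Finset.sum_le_sum fun i hi =>
        hf _ (hgS _ (Finset.mem_range.1 hi)) _ (hgS _ (Finset.mem_range.1 hi).le) (hstep i)
    _ = m * ε := by simp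

lemma modulus_bddAbove (hf : UniformContinuousOn f (Ici 0)) (δ : ℝ) :
    BddAbove {d : ℝ | ∃ t s : ℝ, 0 ≤ t ∧ 0 ≤ s ∧ |t - s| ≤ δ ∧ d = |f t - f s|} := by
  obtain ⟨δ₀, hδ₀, hf₁⟩ := Metric.uniformContinuousOn_iff_le.1 hf 1 one_pos
  set m : ℕ := ⌈δ / δ₀⌉₊ + 1
  have hδm : δ ≤ m * δ₀ := by
    have := (div_le_iff₀ hδ₀).1 (Nat.le_ceil (δ / δ₀))
    push_cast [m]
    nlinarith
  refine ⟨m, ?_⟩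
  rintro d ⟨t, s, ht, hs, hts, rfl⟩
  simpa using abs_sub_le_mul_of_forall_abs_sub_le (convex_Ici 0) hf₁ (mem_Ici.2 ht)
    (mem_Ici.2 hs) (by positivity) (hts.trans hδm)

lemma abs_sub_le_modulus (hf : UniformContinuousOn f (Ici 0)) {t s δ : ℝ} (ht : 0 ≤ t)
    (hs : 0 ≤ s) (hts : |t - s| ≤ δ) : |f t - f s| ≤ modulus f δ :=
  le_csSup (modulus_bddAbove hf δ) ⟨t, s, ht, hs, hts, rfl⟩

lemma modulus_nonneg (hf : UniformContinuousOn f (Ici 0)) {δ : ℝ} (hδ : 0 ≤ δ) :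
    0 ≤ modulus f δ := by
  simpa using abs_sub_le_modulus hf le_rfl le_rfl (by simpa using hδ)

lemma abs_sub_le_one_add_sq_div_mul_modulus (hf : UniformContinuousOn f (Ici 0)) {t s δ : ℝ}
    (ht : 0 ≤ t) (hs : 0 ≤ s) (hδ : 0 < δ) :
    |f t - f s| ≤ (1 + (t - s) ^ 2 / δ ^ 2) * modulus f δ := by
  set a := |t - s| / δ
  have ha : 0 ≤ a := by positivity
  set m : ℕ := max 1 ⌈a⌉₊
  have hts : |t - s| ≤ m * δ := by
    have : a ≤ m := (Nat.le_ceil a).trans (by exact_mod_cast le_max_right 1 ⌈a⌉₊)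
    rwa [div_le_iff₀ hδ] at this
  have hm : (m : ℝ) ≤ 1 + (t - s) ^ 2 / δ ^ 2 := by
    have hsq : (t - s) ^ 2 / δ ^ 2 = a ^ 2 := by rw [div_pow, sq_abs]
    rw [hsq]
    rcases le_or_gt a 1 with ha1 | ha1
    · have : m = 1 := max_eq_left (Nat.ceil_le.2 (by exact_mod_cast ha1))
      rw [this, Nat.cast_one]
      nlinarith
    · have : m = ⌈a⌉₊ := max_eq_right (Nat.one_le_iff_ne_zero.2 (by positivity))
      rw [this]
      nlinarith [Nat.ceil_lt_add_one ha]
  calc |f t - f s| ≤ m * modulus f δ :=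
        abs_sub_le_mul_of_forall_abs_sub_le (convex_Ici 0)
          (fun u hu v hv => abs_sub_le_modulus hf hu hv) (mem_Ici.2 ht) (mem_Ici.2 hs)
          (lt_max_of_lt_left one_pos) hts
    _ ≤ (1 + (t - s) ^ 2 / δ ^ 2) * modulus f δ :=
        mul_le_mul_of_nonneg_right hm (modulus_nonneg hf hδ.le)

end Modulus

section WeightedMean

variable {q ξ : ℕ → ℝ} {x : ℝ}

lemma tsum_mul_comp_eq_of_tsum_mul_sq_sub_eq_zero (hq : ∀ k, 0 ≤ q k) (hq1 : HasSum q 1)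
    (hvar : Summable fun k => q k * (ξ k - x) ^ 2) (h0 : ∑' k, q k * (ξ k - x) ^ 2 = 0)
    (g : ℝ → ℝ) : ∑' k, q k * g (ξ k) = g x := by
  have hterm := congrFun ((hasSum_zero_iff_of_nonneg fun k => mul_nonneg (hq k) (sq_nonneg _)).1
    (h0 ▸ hvar.hasSum))
  have hcongr : ∀ k, q k * g (ξ k) = g x * q k := by
    intro k
    rcases mul_eq_zero.1 (hterm k) with hqk | hξk
    · simp [hqk]
    · rw [sub_eq_zero.1 (pow_eq_zero_iff two_ne_zero |>.1 hξk), mul_comm]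
  rw [tsum_congr hcongr, tsum_mul_left, hq1.tsum_eq, mul_one]

variable {f : ℝ → ℝ}

lemma abs_tsum_mul_sub_le_one_add_div_mul_modulus (hq : ∀ k, 0 ≤ q k) (hq1 : HasSum q 1)
    (hvar : Summable fun k => q k * (ξ k - x) ^ 2) (hξ : ∀ k, 0 ≤ ξ k) (hx : 0 ≤ x)
    (hf : UniformContinuousOn f (Ici 0)) {δ : ℝ} (hδ : 0 < δ) :
    |∑' k, q k * f (ξ k) - f x| ≤
      (1 + (∑' k, q k * (ξ k - x) ^ 2) / δ ^ 2) * modulus f δ := by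
  set ω := modulus f δ
  set T := ∑' k, q k * (ξ k - x) ^ 2
  have hbound : ∀ k, ‖q k * (f (ξ k) - f x)‖ ≤ ω * q k + ω / δ ^ 2 * (q k * (ξ k - x) ^ 2) := by
    intro k
    rw [Real.norm_eq_abs, abs_mul, abs_of_nonneg (hq k)]
    calc q k * |f (ξ k) - f x| ≤ q k * ((1 + (ξ k - x) ^ 2 / δ ^ 2) * ω) :=
          mul_le_mul_of_nonneg_left (abs_sub_le_one_add_sq_div_mul_modulus hf (hξ k) hx hδ) (hq k)
      _ = ω * q k + ω / δ ^ 2 * (q k * (ξ k - x) ^ 2) := by ring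
  have hmajorant : HasSum (fun k => ω * q k + ω / δ ^ 2 * (q k * (ξ k - x) ^ 2))
      (ω + ω / δ ^ 2 * T) := by
    simpa using (hq1.mul_left ω).add (hvar.hasSum.mul_left (ω / δ ^ 2))
  have hdev : Summable fun k => q k * (f (ξ k) - f x) :=
    Summable.of_norm_bounded hmajorant.summable hbound
  have hmean : ∑' k, q k * f (ξ k) = ∑' k, q k * (f (ξ k) - f x) + f x := by
    refine HasSum.tsum_eq ?_
    convert hdev.hasSum.add (hq1.mul_left (f x)) using 1
    · ext k; ring
    · ring
  calc |∑' k, q k * f (ξ k) - f x| = ‖∑' k, q k * (f (ξ k) - f x)‖ := by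
        rw [hmean, add_sub_cancel_right, Real.norm_eq_abs]
    _ ≤ ω + ω / δ ^ 2 * T := tsum_of_norm_bounded hmajorant hbound
    _ = (1 + T / δ ^ 2) * ω := by ring

lemma abs_tsum_mul_sub_le_two_mul_modulus (hq : ∀ k, 0 ≤ q k) (hq1 : HasSum q 1)
    (hvar : Summable fun k => q k * (ξ k - x) ^ 2) (hξ : ∀ k, 0 ≤ ξ k) (hx : 0 ≤ x)
    (hf : UniformContinuousOn f (Ici 0)) :
    |∑' k, q k * f (ξ k) - f x| ≤ 2 * modulus f (√(∑' k, q k * (ξ k - x) ^ 2)) := by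
  rcases (tsum_nonneg fun k => mul_nonneg (hq k) (sq_nonneg (ξ k - x))).eq_or_lt with h0 | hpos
  · rw [tsum_mul_comp_eq_of_tsum_mul_sq_sub_eq_zero hq hq1 hvar h0.symm, sub_self, abs_zero]
    exact mul_nonneg zero_le_two (modulus_nonneg hf (Real.sqrt_nonneg _))
  · calc |∑' k, q k * f (ξ k) - f x|
        ≤ (1 + (∑' k, q k * (ξ k - x) ^ 2) / √(∑' k, q k * (ξ k - x) ^ 2) ^ 2) *
            modulus f (√(∑' k, q k * (ξ k - x) ^ 2)) :=
          abs_tsum_mul_sub_le_one_add_div_mul_modulus hq hq1 hvar hξ hx hf (Real.sqrt_pos.2 hpos)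
      _ = 2 * modulus f (√(∑' k, q k * (ξ k - x) ^ 2)) := by
          rw [Real.sq_sqrt hpos.le, div_self hpos.ne']
          norm_num

end WeightedMean

lemma summable_mul_pow_of_summable_mul_geometric {p : ℕ → ℝ} {r : ℝ} (hr : 1 < r)
    (hp : ∀ k, 0 ≤ p k) (hsum : Summable fun k => p k * r ^ k) (j : ℕ) :
    Summable fun k => p k * (k : ℝ) ^ j := by
  have hr0 : 0 < r := one_pos.trans hr
  have hgeom : Summable fun k : ℕ => (k : ℝ) ^ j * r⁻¹ ^ k :=
    summable_pow_mul_geometric_of_norm_lt_one j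
      (by rw [norm_inv, Real.norm_of_nonneg hr0.le]; exact inv_lt_one_of_one_lt₀ hr)
  refine Summable.of_nonneg_of_le (fun k => mul_nonneg (hp k) (by positivity)) (fun k => ?_)
    (hgeom.mul_left (∑' k, p k * r ^ k))
  calc p k * (k : ℝ) ^ j = (p k * r ^ k) * ((k : ℝ) ^ j * r⁻¹ ^ k) := by
        rw [inv_pow, mul_mul_mul_comm, mul_inv_cancel₀ (pow_ne_zero _ hr0.ne'), mul_one]
    _ ≤ (∑' k, p k * r ^ k) * ((k : ℝ) ^ j * r⁻¹ ^ k) :=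
        mul_le_mul_of_nonneg_right
          (hsum.le_tsum k fun i _ => mul_nonneg (hp i) (by positivity)) (by positivity)

namespace BrenkeData

variable (B : BrenkeData) (n : ℕ)

noncomputable def weight (x : ℝ) (k : ℕ) : ℝ :=
  (B.A₁ (B.h 1) * B.A₂ (n * x * B.h 1))⁻¹ * B.p k (n * x)

lemma stancuL_eq_tsum_weight (ν₁ ν₂ : ℝ) (g : ℝ → ℝ) (x : ℝ) :
    stancuL B ν₁ ν₂ n g x = ∑' k, B.weight n x k * g ((k + ν₁) / (n + ν₂)) := by
  simp only [stancuL, weight, mul_assoc, tsum_mul_left]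

lemma weight_nonneg {x : ℝ} (hx : 0 ≤ x) (k : ℕ) : 0 ≤ B.weight n x k :=
  mul_nonneg (inv_nonneg.2 (mul_pos (B.hA₁pos _) (B.hA₂pos _)).le) (B.hpos k _ (by positivity))

lemma hasSum_weight (x : ℝ) : HasSum (B.weight n x) 1 := by
  have hgen := (B.hgen (n * x) 1 (by simpa using B.hR)).mul_left
    (B.A₁ (B.h 1) * B.A₂ (n * x * B.h 1))⁻¹
  rw [inv_mul_cancel₀ (mul_pos (B.hA₁pos _) (B.hA₂pos _)).ne'] at hgen
  simp only [one_pow, mul_one] at hgen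
  exact hgen

lemma summable_weight_mul_pow {x : ℝ} (hx : 0 ≤ x) (j : ℕ) :
    Summable fun k => B.weight n x k * (k : ℝ) ^ j := by
  have hr : |(1 + B.R) / 2| < B.R := by
    rw [abs_of_pos (by linarith [B.hR])]
    linarith [B.hR]
  have hp := summable_mul_pow_of_summable_mul_geometric (by linarith [B.hR])
    (fun k => B.hpos k (n * x) (by positivity)) (B.hgen (n * x) _ hr).summable j
  simpa only [weight, mul_assoc] using hp.mul_left (B.A₁ (B.h 1) * B.A₂ (n * x * B.h 1))⁻¹

lemma summable_weight_mul_sq_sub {x : ℝ} (hx : 0 ≤ x) (ν₁ ν₂ : ℝ) :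
    Summable fun k => B.weight n x k * ((k + ν₁) / (n + ν₂) - x) ^ 2 := by
  set c := ((n : ℝ) + ν₂)⁻¹
  set d := c * ν₁ - x
  have hexpand : ∀ k : ℕ, c ^ 2 * (B.weight n x k * (k : ℝ) ^ 2) +
      2 * c * d * (B.weight n x k * (k : ℝ) ^ 1) + d ^ 2 * (B.weight n x k * (k : ℝ) ^ 0) =
      B.weight n x k * ((k + ν₁) / (n + ν₂) - x) ^ 2 := by
    intro k
    simp only [d, c, div_eq_mul_inv]
    ring
  exact ((((B.summable_weight_mul_pow n hx 2).mul_left _).add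
    ((B.summable_weight_mul_pow n hx 1).mul_left _)).add
    ((B.summable_weight_mul_pow n hx 0).mul_left _)).congr hexpand

end BrenkeData

theorem stancuL_modulus_estimate_general (B : BrenkeData) (ν₁ ν₂ : ℝ) (hν₁ : 0 ≤ ν₁) (hν₂ : 0 ≤ ν₂)
    (f : ℝ → ℝ) (hf : UniformContinuousOn f (Set.Ici 0))
    (n : ℕ) (x : ℝ) (hx : 0 ≤ x) :
    |stancuL B ν₁ ν₂ n f x - f x| ≤
      2 * modulus f (Real.sqrt (stancuL B ν₁ ν₂ n (fun s => (s - x) ^ 2) x)) := by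
  simp only [B.stancuL_eq_tsum_weight]
  exact abs_tsum_mul_sub_le_two_mul_modulus (B.weight_nonneg n hx) (B.hasSum_weight n x)
    (B.summable_weight_mul_sq_sub n hx ν₁ ν₂) (fun k => by positivity) hx hf

/-- Theorem 2.2: `|L_n^{(ν₁,ν₂)}(f;x) − f(x)| ≤ 2 ω(f; δₙ(x))` with
`δₙ(x) = √(L_n^{(ν₁,ν₂)}((s−x)²; x))` for uniformly continuous `f` in the class `E`. -/
theorem stancuL_modulus_estimate (B : BrenkeData) (ν₁ ν₂ : ℝ) (hν₁ : 0 ≤ ν₁) (hν₂ : 0 ≤ ν₂)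
    (f : ℝ → ℝ) (hf : UniformContinuousOn f (Set.Ici 0))
    (hfE : ∃ l : ℝ, Filter.Tendsto (fun x => f x / (1 + x ^ 2)) Filter.atTop (nhds l))
    (n : ℕ) (hn : 1 ≤ n) (x : ℝ) (hx : 0 ≤ x) :
    |stancuL B ν₁ ν₂ n f x - f x| ≤
      2 * modulus f (Real.sqrt (stancuL B ν₁ ν₂ n (fun s => (s - x) ^ 2) x)) :=
  stancuL_modulus_estimate_general B ν₁ ν₂ hν₁ hν₂ f hf n x hx
end

section
/- Let m > −1 be an integer and let G_k^{(m)} be the Miller-Lee polynomials. For ν₁, ν₂ ≥ 0 define the operators L_n^{(ν₁,ν₂)}(f; x) = e^{−nx} Σ_{k=0}^∞ [G_k^{(m)}(2nx)/2^{m+k+1}]·f((k+ν₁)/(n+ν₂)). Then for every continuous f : [0,∞) → ℝ with f(x)/(1+x²) convergent as x → ∞, L_n^{(ν₁,ν₂)}(f; x) → f(x) uniformly as n → ∞ on every compact subset of [0,∞). -/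
/-- The Miller-Lee polynomials
`G_k^{(m)}(x) = ∑_{r=0}^{k} (m+1)_r/(r!(k−r)!) x^{k−r}`,
where `(·)_r` is the Pochhammer symbol. -/
noncomputable def millerLee (m : ℤ) (k : ℕ) (x : ℝ) : ℝ :=
  ∑ r ∈ Finset.range (k + 1),
    (ascPochhammer ℝ r).eval ((m : ℝ) + 1) / (r.factorial * (k - r).factorial) * x ^ (k - r)

/-- The Stancu type operators built from the Miller-Lee polynomials:
`L_n^{(ν₁,ν₂)}(f;x) = e^{−nx} ∑ₖ G_k^{(m)}(2nx)/2^{m+k+1} · f((k+ν₁)/(n+ν₂))`. -/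
noncomputable def mlOp (m : ℤ) (ν₁ ν₂ : ℝ) (n : ℕ) (f : ℝ → ℝ) (x : ℝ) : ℝ :=
  Real.exp (-(n * x)) *
    ∑' k : ℕ, millerLee m k (2 * n * x) / (2 : ℝ) ^ (m + (k : ℤ) + 1) * f ((k + ν₁) / (n + ν₂))

/-!
For `m = M ∈ ℕ` and `λ = n x`, the coefficients `e^{-λ} G_k^{(M)}(2λ) / 2^{M+k+1}` of the
operator form the convolution of the negative binomial weights `C(r+M, M) / 2^{r+M+1}` with the
Poisson weights of mean `λ`: this is the generating function `(1-t)^{-(M+1)} e^{2λt}` at `t = 1/2`.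
So `L_n` is a positive operator reproducing constants, and the means and variances of the two
laws give `L_n((t-x)²; x) = ((M+1+ν₁-ν₂x)² + nx + 2(M+1)) / (n+ν₂)² = O(1/n)` uniformly on
compacts. A continuous `f` with `|f t| ≤ C (1 + t²)` satisfies `|f t - f x| ≤ ε + B_ε (t-x)²`
for `x ∈ [0, R]`, `t ≥ 0`, whence `|L_n f x - f x| ≤ ε + B_ε L_n((t-x)²; x)`.
-/

open Finset Filter Topology Set

structure HasMoments (w : ℕ → ℝ) (μ₁ μ₂ : ℝ) : Prop where
  hasSum : HasSum w 1
  hasSum_mul : HasSum (fun k : ℕ => (k : ℝ) * w k) μ₁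
  hasSum_sq_mul : HasSum (fun k : ℕ => (k : ℝ) ^ 2 * w k) μ₂

lemma HasMoments.hasSum_mul_affine_sq {w : ℕ → ℝ} {μ₁ μ₂ : ℝ} (h : HasMoments w μ₁ μ₂)
    (a b : ℝ) :
    HasSum (fun k : ℕ => w k * (a * k + b) ^ 2) (a ^ 2 * μ₂ + 2 * a * b * μ₁ + b ^ 2) := by
  have h' := ((h.hasSum_sq_mul.mul_left (a ^ 2)).add (h.hasSum_mul.mul_left (2 * a * b))).add
    (h.hasSum.mul_left (b ^ 2))
  rw [mul_one] at h'
  exact h'.congr_fun fun k => by ring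

lemma abs_tsum_mul_sub_le {w T : ℕ → ℝ} {g : ℝ → ℝ} {x c B V : ℝ} (hw₀ : ∀ k, 0 ≤ w k)
    (hw : HasSum w 1) (hV : HasSum (fun k => w k * (T k - x) ^ 2) V)
    (hg : ∀ k, |g (T k) - g x| ≤ c + B * (T k - x) ^ 2) :
    |∑' k, w k * g (T k) - g x| ≤ c + B * V := by
  set d : ℕ → ℝ := fun k => w k * (g (T k) - g x)
  have hbound : HasSum (fun k => w k * (c + B * (T k - x) ^ 2)) (c + B * V) := by
    have h := (hw.mul_left c).add (hV.mul_left B)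
    rw [mul_one] at h
    exact h.congr_fun fun k => by ring
  have hd_le (k : ℕ) : ‖d k‖ ≤ w k * (c + B * (T k - x) ^ 2) := by
    rw [Real.norm_eq_abs, abs_mul, abs_of_nonneg (hw₀ k)]
    exact mul_le_mul_of_nonneg_left (hg k) (hw₀ k)
  have hd : Summable d := .of_norm_bounded hbound.summable hd_le
  have hsplit : ∑' k, w k * g (T k) = ∑' k, d k + g x := by
    have h := hd.hasSum.add (hw.mul_left (g x))
    rw [mul_one] at h
    exact (h.congr_fun fun k => by ring).tsum_eq
  rw [hsplit, add_sub_cancel_right, ← Real.norm_eq_abs]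
  exact tsum_of_norm_bounded hbound hd_le

def cauchyProduct (a b : ℕ → ℝ) (k : ℕ) : ℝ :=
  ∑ p ∈ antidiagonal k, a p.1 * b p.2

lemma hasSum_cauchyProduct {a b : ℕ → ℝ} {A B : ℝ} (ha : HasSum a A) (hb : HasSum b B) :
    HasSum (cauchyProduct a b) (A * B) := by
  have ha' : Summable fun k => ‖a k‖ := ha.summable.norm
  have hb' : Summable fun k => ‖b k‖ := hb.summable.norm
  rw [← ha.tsum_eq, ← hb.tsum_eq, tsum_mul_tsum_eq_tsum_sum_antidiagonal_of_summable_norm ha' hb']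
  exact (summable_norm_sum_mul_antidiagonal_of_summable_norm ha' hb').of_norm.hasSum

lemma mul_cauchyProduct (g a b : ℕ → ℝ) (k : ℕ) :
    g k * cauchyProduct a b k = ∑ p ∈ antidiagonal k, g (p.1 + p.2) * (a p.1 * b p.2) := by
  rw [cauchyProduct, mul_sum]
  refine sum_congr rfl fun p hp => ?_
  rw [mem_antidiagonal.mp hp]

lemma HasMoments.cauchyProduct {a b : ℕ → ℝ} {μ₁ μ₂ ν₁ ν₂ : ℝ} (ha : HasMoments a μ₁ μ₂)
    (hb : HasMoments b ν₁ ν₂) :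
    HasMoments (cauchyProduct a b) (μ₁ + ν₁) (μ₂ + 2 * μ₁ * ν₁ + ν₂) where
  hasSum := by simpa using hasSum_cauchyProduct ha.hasSum hb.hasSum
  hasSum_mul := by
    convert (hasSum_cauchyProduct ha.hasSum_mul hb.hasSum).add
      (hasSum_cauchyProduct ha.hasSum hb.hasSum_mul) using 1
    · ext k
      rw [mul_cauchyProduct (fun k : ℕ => (k : ℝ))]
      simp only [_root_.cauchyProduct, ← sum_add_distrib]
      refine sum_congr rfl fun p _ => ?_
      push_cast
      ring
    · ring
  hasSum_sq_mul := by
    convert ((hasSum_cauchyProduct ha.hasSum_sq_mul hb.hasSum).add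
      ((hasSum_cauchyProduct ha.hasSum_mul hb.hasSum_mul).mul_left 2)).add
      (hasSum_cauchyProduct ha.hasSum hb.hasSum_sq_mul) using 1
    · ext k
      rw [mul_cauchyProduct (fun k : ℕ => (k : ℝ) ^ 2)]
      simp only [_root_.cauchyProduct, mul_sum, ← sum_add_distrib]
      refine sum_congr rfl fun p _ => ?_
      push_cast
      ring
    · ring

lemma hasSum_natCast_mul_of_succ {w v : ℕ → ℝ} {a : ℝ}
    (hw : ∀ s : ℕ, ((s : ℝ) + 1) * w (s + 1) = v s) (hv : HasSum v a) :
    HasSum (fun r : ℕ => (r : ℝ) * w r) a := by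
  rw [← hasSum_nat_add_iff' 1]
  simpa [hw] using hv

lemma hasMoments_of_succ {w v : ℕ → ℝ} {c μ : ℝ} (hw : HasSum w 1)
    (hshift : ∀ s : ℕ, ((s : ℝ) + 1) * w (s + 1) = c * v s) (hv : HasSum v 1)
    (hμ : HasSum (fun s : ℕ => (s : ℝ) * v s) μ) : HasMoments w c (c * (μ + 1)) where
  hasSum := hw
  hasSum_mul := hasSum_natCast_mul_of_succ hshift (by simpa using hv.mul_left c)
  hasSum_sq_mul := by
    have := hasSum_natCast_mul_of_succ (w := fun r : ℕ => (r : ℝ) * w r)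
      (fun s => by push_cast; rw [hshift]; ring) ((hμ.add hv).mul_left c)
    simpa only [sq, mul_assoc] using this

noncomputable def negBinWeight (M r : ℕ) : ℝ := ((r + M).choose M : ℝ) / 2 ^ (r + M + 1)

noncomputable def poissonWeight (lam : ℝ) (j : ℕ) : ℝ := Real.exp (-lam) * lam ^ j / j.factorial

lemma hasSum_negBinWeight (M : ℕ) : HasSum (negBinWeight M) 1 := by
  have h := hasSum_choose_mul_geometric_of_norm_lt_one (𝕜 := ℝ) M (r := 2⁻¹) (by norm_num)
  rw [show (1 : ℝ) / (1 - 2⁻¹) ^ (M + 1) = 2 ^ (M + 1) by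
    rw [show (1 : ℝ) - 2⁻¹ = 2⁻¹ by norm_num, inv_pow, one_div, inv_inv]] at h
  have hw : negBinWeight M =
      fun r => (2 ^ (M + 1))⁻¹ * (((r + M).choose M : ℕ) * (2 : ℝ)⁻¹ ^ r) := by
    ext r
    rw [negBinWeight, inv_pow]
    field_simp
    ring
  rw [hw, ← inv_mul_cancel₀ (pow_ne_zero (M + 1) two_ne_zero)]
  exact h.mul_left _

lemma succ_mul_negBinWeight_succ (M s : ℕ) :
    ((s : ℝ) + 1) * negBinWeight M (s + 1) = (M + 1) * negBinWeight (M + 1) s := by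
  have h : ((s + 1 + M).choose (M + 1) : ℝ) * (M + 1) = (s + 1 + M).choose M * (s + 1) := by
    have := Nat.choose_succ_right_eq (s + 1 + M) M
    rw [show s + 1 + M - M = s + 1 by omega] at this
    exact_mod_cast this
  rw [negBinWeight, negBinWeight, show s + (M + 1) = s + 1 + M by omega]
  linear_combination h.symm / 2 ^ (s + 1 + M + 1)

lemma hasMoments_negBinWeight (M : ℕ) :
    HasMoments (negBinWeight M) (M + 1) ((M + 1) * (M + 3)) := by
  have hmean : HasSum (fun s : ℕ => (s : ℝ) * negBinWeight (M + 1) s) (M + 2) := by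
    refine hasSum_natCast_mul_of_succ (fun s => succ_mul_negBinWeight_succ (M + 1) s) ?_
    simpa [add_assoc, one_add_one_eq_two] using
      (hasSum_negBinWeight (M + 2)).mul_left ((M : ℝ) + 2)
  convert hasMoments_of_succ (hasSum_negBinWeight M) (succ_mul_negBinWeight_succ M)
    (hasSum_negBinWeight (M + 1)) hmean using 1
  ring

lemma hasSum_poissonWeight (lam : ℝ) : HasSum (poissonWeight lam) 1 := by
  have h := (NormedSpace.expSeries_div_hasSum_exp lam).mul_left (Real.exp (-lam))
  rw [← Real.exp_eq_exp_ℝ, ← Real.exp_add, neg_add_cancel, Real.exp_zero] at h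
  have hw : poissonWeight lam = fun j => Real.exp (-lam) * (lam ^ j / j.factorial) := by
    ext j
    rw [poissonWeight, mul_div_assoc]
  rwa [hw]

lemma succ_mul_poissonWeight_succ (lam : ℝ) (s : ℕ) :
    ((s : ℝ) + 1) * poissonWeight lam (s + 1) = lam * poissonWeight lam s := by
  rw [poissonWeight, poissonWeight, Nat.factorial_succ]
  push_cast
  field_simp
  ring

lemma hasMoments_poissonWeight (lam : ℝ) :
    HasMoments (poissonWeight lam) lam (lam * (lam + 1)) :=
  hasMoments_of_succ (hasSum_poissonWeight lam) (succ_mul_poissonWeight_succ lam)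
    (hasSum_poissonWeight lam)
    (hasSum_natCast_mul_of_succ (succ_mul_poissonWeight_succ lam)
      (by simpa using (hasSum_poissonWeight lam).mul_left lam))

lemma exists_abs_le_mul_one_add_sq {f : ℝ → ℝ} {l : ℝ} (hf : ContinuousOn f (Ici 0))
    (hl : Tendsto (fun x => f x / (1 + x ^ 2)) atTop (𝓝 l)) :
    ∃ C, ∀ t, 0 ≤ t → |f t| ≤ C * (1 + t ^ 2) := by
  set g : ℝ → ℝ := fun x => f x / (1 + x ^ 2)
  have hg : ContinuousOn g (Ici 0) :=
    hf.div (by fun_prop) fun x _ => by positivity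
  obtain ⟨A, hA⟩ := eventually_atTop.mp (hl.abs.eventually (gt_mem_nhds (lt_add_one |l|)))
  obtain ⟨C, hC⟩ := (isCompact_Icc (a := 0) (b := A)).exists_bound_of_continuousOn
    (hg.mono Icc_subset_Ici_self)
  refine ⟨max C (|l| + 1), fun t ht => ?_⟩
  have hgt : |g t| ≤ max C (|l| + 1) := by
    rcases le_total t A with htA | hAt
    · exact (hC t ⟨ht, htA⟩).trans (le_max_left _ _)
    · exact (hA t hAt).le.trans (le_max_right _ _)
  have hpos : 0 < 1 + t ^ 2 := by positivity
  calc |f t| = |g t| * (1 + t ^ 2) := by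
        rw [abs_div, abs_of_pos hpos, div_mul_cancel₀ _ hpos.ne']
    _ ≤ max C (|l| + 1) * (1 + t ^ 2) := mul_le_mul_of_nonneg_right hgt hpos.le

lemma exists_abs_sub_le_add_mul_sq {f : ℝ → ℝ} {C : ℝ} (hf : ContinuousOn f (Ici 0))
    (hC : ∀ t, 0 ≤ t → |f t| ≤ C * (1 + t ^ 2)) (R : ℝ) {ε : ℝ} (hε : 0 < ε) :
    ∃ B, 0 ≤ B ∧ ∀ x ∈ Icc 0 R, ∀ t, 0 ≤ t → |f t - f x| ≤ ε + B * (t - x) ^ 2 := by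
  have hC₀ : 0 ≤ C := by simpa using (abs_nonneg _).trans (hC 0 le_rfl)
  obtain ⟨δ, hδ, hfδ⟩ := Metric.uniformContinuousOn_iff.mp
    ((isCompact_Icc (a := 0) (b := R + 1)).uniformContinuousOn_of_continuous
      (hf.mono Icc_subset_Ici_self)) ε hε
  set δ' := min δ 1
  have hδ' : 0 < δ' := lt_min hδ one_pos
  have hB : 0 ≤ C * (2 + 3 * R ^ 2) / δ' ^ 2 + 2 * C := by positivity
  refine ⟨_, hB, fun x hx t ht => ?_⟩
  rcases lt_or_ge |t - x| δ' with hnear | hfar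
  · have htR : t ≤ R + 1 := by
      linarith [le_abs_self (t - x), min_le_right δ 1, hx.2]
    have := hfδ t ⟨ht, htR⟩ x ⟨hx.1, by linarith [hx.2]⟩
      ((Real.dist_eq t x).trans_lt (hnear.trans_le (min_le_left δ 1)))
    rw [Real.dist_eq] at this
    linarith [mul_nonneg hB (sq_nonneg (t - x))]
  · have hsq : δ' ^ 2 ≤ (t - x) ^ 2 := by
      rw [← sq_abs (t - x)]
      exact pow_le_pow_left₀ hδ'.le hfar 2
    have hx2 : x ^ 2 ≤ R ^ 2 := pow_le_pow_left₀ hx.1 hx.2 2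
    have hconst : C * (2 + 3 * R ^ 2) ≤ C * (2 + 3 * R ^ 2) / δ' ^ 2 * (t - x) ^ 2 := by
      rw [div_mul_eq_mul_div, le_div_iff₀ (by positivity)]
      exact mul_le_mul_of_nonneg_left hsq (by positivity)
    calc |f t - f x| ≤ |f t| + |f x| := abs_sub _ _
      _ ≤ C * (1 + t ^ 2) + C * (1 + x ^ 2) := add_le_add (hC t ht) (hC x hx.1)
      _ ≤ C * (2 + 3 * R ^ 2) + 2 * C * (t - x) ^ 2 := by
        nlinarith [sq_nonneg (t - 2 * x)]
      _ ≤ ε + (C * (2 + 3 * R ^ 2) / δ' ^ 2 + 2 * C) * (t - x) ^ 2 := by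
        nlinarith

noncomputable def mlWeight (m : ℤ) (lam : ℝ) (k : ℕ) : ℝ :=
  Real.exp (-lam) * millerLee m k (2 * lam) / (2 : ℝ) ^ (m + (k : ℤ) + 1)

lemma mlOp_eq_tsum (m : ℤ) (ν₁ ν₂ : ℝ) (n : ℕ) (f : ℝ → ℝ) (x : ℝ) :
    mlOp m ν₁ ν₂ n f x = ∑' k : ℕ, mlWeight m (n * x) k * f ((k + ν₁) / (n + ν₂)) := by
  rw [mlOp, ← tsum_mul_left]
  congr 1 with k
  rw [mlWeight, mul_assoc 2]
  ring

lemma ascPochhammer_eval_natCast_add_one (M r : ℕ) :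
    (ascPochhammer ℝ r).eval ((M : ℝ) + 1) = r.factorial * (r + M).choose M := by
  rw [← Nat.cast_add_one, ← ascPochhammer_eval_cast, ascPochhammer_nat_eq_ascFactorial,
    Nat.ascFactorial_eq_factorial_mul_choose, add_comm M, ← Nat.choose_symm_add]
  push_cast
  ring

lemma mlWeight_eq_cauchyProduct (M : ℕ) (lam : ℝ) :
    mlWeight M lam = cauchyProduct (negBinWeight M) (poissonWeight lam) := by
  ext k
  rw [mlWeight, cauchyProduct,
    Nat.sum_antidiagonal_eq_sum_range_succ (fun r j => negBinWeight M r * poissonWeight lam j),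
    millerLee, mul_sum, sum_div]
  refine sum_congr rfl fun r hr => ?_
  obtain ⟨j, rfl⟩ := Nat.exists_eq_add_of_le (Nat.lt_succ_iff.mp (mem_range.mp hr))
  rw [Nat.add_sub_cancel_left, Int.cast_natCast, ascPochhammer_eval_natCast_add_one,
    show (M : ℤ) + ((r + j : ℕ) : ℤ) + 1 = ((r + M + 1 + j : ℕ) : ℤ) by push_cast; ring,
    zpow_natCast, negBinWeight, poissonWeight]
  field_simp
  ring

lemma mlWeight_nonneg (M : ℕ) {lam : ℝ} (hlam : 0 ≤ lam) (k : ℕ) : 0 ≤ mlWeight M lam k := by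
  rw [mlWeight_eq_cauchyProduct]
  exact sum_nonneg fun p _ => by unfold negBinWeight poissonWeight; positivity

lemma hasMoments_mlWeight (M : ℕ) (lam : ℝ) :
    HasMoments (mlWeight M lam) (M + 1 + lam)
      ((M + 1) * (M + 3) + 2 * (M + 1) * lam + lam * (lam + 1)) := by
  rw [mlWeight_eq_cauchyProduct]
  exact (hasMoments_negBinWeight M).cauchyProduct (hasMoments_poissonWeight lam)

/-- `L_n((t - x)²; x)`, see `hasSum_mlWeight_mul_sq`. -/
noncomputable def mlSecondMoment (M : ℕ) (ν₁ ν₂ : ℝ) (n : ℕ) (x : ℝ) : ℝ :=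
  ((M + 1 + ν₁ - ν₂ * x) ^ 2 + n * x + 2 * (M + 1)) / (n + ν₂) ^ 2

lemma hasSum_mlWeight_mul_sq (M n : ℕ) (ν₁ ν₂ x : ℝ) (hn : (n : ℝ) + ν₂ ≠ 0) :
    HasSum (fun k : ℕ => mlWeight M (n * x) k * ((k + ν₁) / (n + ν₂) - x) ^ 2)
      (mlSecondMoment M ν₁ ν₂ n x) := by
  have h := (hasMoments_mlWeight M (n * x)).hasSum_mul_affine_sq (1 / (n + ν₂)) (ν₁ / (n + ν₂) - x)
  rw [show (1 / (n + ν₂)) ^ 2 * ((M + 1) * (M + 3) + 2 * (M + 1) * (n * x) + n * x * (n * x + 1))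
      + 2 * (1 / (n + ν₂)) * (ν₁ / (n + ν₂) - x) * (M + 1 + n * x) + (ν₁ / (n + ν₂) - x) ^ 2
      = mlSecondMoment M ν₁ ν₂ n x by
    rw [mlSecondMoment]
    field_simp
    ring] at h
  refine h.congr_fun fun k => ?_
  congr 2
  field_simp
  ring

lemma abs_mlOp_sub_le (M : ℕ) {ν₁ ν₂ : ℝ} (hν₁ : 0 ≤ ν₁) (hν₂ : 0 ≤ ν₂) {n : ℕ} (hn : 0 < n)
    {f : ℝ → ℝ} {x c B : ℝ} (hx : 0 ≤ x) (hf : ∀ t, 0 ≤ t → |f t - f x| ≤ c + B * (t - x) ^ 2) :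
    |mlOp M ν₁ ν₂ n f x - f x|
      ≤ c + B * mlSecondMoment M ν₁ ν₂ n x := by
  have hn' : (0 : ℝ) < n + ν₂ := by positivity
  rw [mlOp_eq_tsum]
  exact abs_tsum_mul_sub_le (mlWeight_nonneg M (by positivity)) (hasMoments_mlWeight M _).hasSum
    (hasSum_mlWeight_mul_sq M n ν₁ ν₂ x hn'.ne') fun k => hf _ (by positivity)

lemma mlSecondMoment_le (M : ℕ) {ν₁ ν₂ R x : ℝ} (hν₁ : 0 ≤ ν₁) (hν₂ : 0 ≤ ν₂) (hx : x ∈ Icc 0 R)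
    {n : ℕ} (hn : 0 < n) :
    mlSecondMoment M ν₁ ν₂ n x ≤ ((M + 1 + ν₁ + ν₂ * R) ^ 2 + 2 * (M + 1) + R) / n := by
  have hn₀ : (0 : ℝ) < n := Nat.cast_pos.mpr hn
  have hn₁ : (1 : ℝ) ≤ n := Nat.one_le_cast.mpr hn
  have hsq : (M + 1 + ν₁ - ν₂ * x) ^ 2 ≤ (M + 1 + ν₁ + ν₂ * R) ^ 2 :=
    sq_le_sq' (by nlinarith [mul_nonneg hν₂ hx.1, mul_le_mul_of_nonneg_left hx.2 hν₂])
      (by nlinarith [mul_nonneg hν₂ hx.1, mul_nonneg hν₂ (hx.1.trans hx.2)])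
  have hnum : (M + 1 + ν₁ - ν₂ * x) ^ 2 + n * x + 2 * (M + 1)
      ≤ n * ((M + 1 + ν₁ + ν₂ * R) ^ 2 + 2 * (M + 1) + R) := by
    nlinarith [mul_le_mul_of_nonneg_right hn₁ (sq_nonneg (M + 1 + ν₁ + ν₂ * R)),
      mul_le_mul_of_nonneg_right hn₁ (by positivity : (0 : ℝ) ≤ 2 * (M + 1)),
      mul_le_mul_of_nonneg_left hx.2 hn₀.le]
  unfold mlSecondMoment
  calc ((M + 1 + ν₁ - ν₂ * x) ^ 2 + n * x + 2 * (M + 1)) / (n + ν₂) ^ 2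
      ≤ ((M + 1 + ν₁ - ν₂ * x) ^ 2 + n * x + 2 * (M + 1)) / n ^ 2 := by
        gcongr
        · have := hx.1
          positivity
        · linarith
    _ ≤ n * ((M + 1 + ν₁ + ν₂ * R) ^ 2 + 2 * (M + 1) + R) / n ^ 2 := by gcongr
    _ = ((M + 1 + ν₁ + ν₂ * R) ^ 2 + 2 * (M + 1) + R) / n := by
        field_simp

/-- Example 3.2: for integer `m > −1`, the Miller-Lee operators converge uniformly
to `f` on every compact subset of `[0,∞)`, for continuous `f` in the class `E`. -/
theorem mlOp_tendstoUniformlyOn (m : ℤ) (hm : -1 < m)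
    (ν₁ ν₂ : ℝ) (hν₁ : 0 ≤ ν₁) (hν₂ : 0 ≤ ν₂)
    (f : ℝ → ℝ) (hf : ContinuousOn f (Set.Ici 0))
    (hfE : ∃ l : ℝ, Filter.Tendsto (fun x => f x / (1 + x ^ 2)) Filter.atTop (nhds l))
    (K : Set ℝ) (hK : K ⊆ Set.Ici 0) (hKc : IsCompact K) :
    TendstoUniformlyOn (fun (n : ℕ) (x : ℝ) => mlOp m ν₁ ν₂ n f x) f Filter.atTop K := by
  lift m to ℕ using by omega
  obtain ⟨l, hl⟩ := hfE
  obtain ⟨C, hC⟩ := exists_abs_le_mul_one_add_sq hf hl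
  obtain ⟨R, hR⟩ := hKc.bddAbove
  have hKR : K ⊆ Icc 0 R := fun x hx => ⟨hK hx, hR hx⟩
  rw [Metric.tendstoUniformlyOn_iff]
  intro ε hε
  obtain ⟨B, hB, hfB⟩ := exists_abs_sub_le_add_mul_sq hf hC R (half_pos hε)
  set D : ℝ := (m + 1 + ν₁ + ν₂ * R) ^ 2 + 2 * (m + 1) + R
  have hsmall : ∀ᶠ n : ℕ in atTop, B * D / n < ε / 2 :=
    (tendsto_const_div_atTop_nhds_zero_nat (B * D)).eventually (gt_mem_nhds (half_pos hε))
  filter_upwards [hsmall, eventually_gt_atTop 0] with n hn hn₀ x hx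
  rw [dist_comm, Real.dist_eq]
  calc |mlOp m ν₁ ν₂ n f x - f x|
      ≤ ε / 2 + B * mlSecondMoment m ν₁ ν₂ n x :=
        abs_mlOp_sub_le m hν₁ hν₂ hn₀ (hK hx) (hfB x (hKR hx))
    _ ≤ ε / 2 + B * (D / n) := by
        gcongr ε / 2 + B * ?_
        exact mlSecondMoment_le m hν₁ hν₂ (hKR hx) hn₀
    _ < ε := by linarith [mul_div_assoc B D n]
end
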